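/- For pairwise distinct reals λ₁,…,λ_{n+1} and any real t, ∑_{σ∈S_{n+1}} ∏_{k=1}^{n} (λ_{σ(1)} − t·λ_{σ(n+1)})/(λ_{σ(k)} − λ_{σ(k+1)}) = ∑_{k=0}^{n} C(n,k)² · t^k (the Narayana-type generating polynomial ∑ C(n,k)² t^k). -/

import Mathlib

/-! For distinct points `M` write `S(g, h; M)` for the sum, over all orderings `L` of `M`, of
`g (first L) * h (last L) / ∏ (L i - L (i + 1))`. Summing over the positions at which a new point
`x` can be inserted into an ordering gives `S(g, h; x :: M) = S(Δg, h; M) - S(g, Δh; M)`, where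
`Δg = slope g x` is the divided difference at `x`. On polynomials `Δ` lowers the degree by one and
keeps the top coefficient, so by induction and Pascal's rule `S(p, q; M) = (-1)^b C(a+b, b) pₐ q_b`
whenever `deg p ≤ a`, `deg q ≤ b` and `|M| = a + b + 1`. Expanding `(λ_first - t λ_last)^n`
binomially, the term `(-t)^m λ_first^(n-m) λ_last^m` then contributes `C(n, m)^2 t^m`. -/

open Finset Polynomial

namespace List

variable {α : Type*}

lemma getLastD_eq_of_ne_nil {L : List α} (hL : L ≠ []) (d d' : α) :
    L.getLastD d = L.getLastD d' := by
  obtain ⟨a, L, rfl⟩ := exists_cons_of_ne_nil hL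
  simp only [getLastD_cons]

lemma headD_mem {L : List α} (hL : L ≠ []) (d : α) : L.headD d ∈ L := by
  obtain ⟨a, L, rfl⟩ := exists_cons_of_ne_nil hL
  exact mem_cons_self

lemma getLastD_mem {L : List α} (hL : L ≠ []) (d : α) : L.getLastD d ∈ L := by
  obtain ⟨a, L, rfl⟩ := exists_cons_of_ne_nil hL
  rw [getLastD_cons]
  exact getLastD_mem_cons

lemma headD_ofFn {n : ℕ} (f : Fin (n + 1) → α) (d : α) : (ofFn f).headD d = f 0 := by
  rw [ofFn_succ, headD_cons]

lemma getLastD_ofFn {n : ℕ} (f : Fin (n + 1) → α) (d : α) :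
    (ofFn f).getLastD d = f (Fin.last n) := by
  rw [getLastD_eq_getLast?, getLast?_eq_some_getLast (by simp), Option.getD_some, getLast_ofFn]
  rfl

lemma ne_nil_of_mem_permutations'Aux {x : α} {L N : List α} (hL : L ∈ N.permutations'Aux x) :
    L ≠ [] := by
  have hperm : L.Perm (x :: N) :=
    mem_permutations'.1 (mem_flatMap.2 ⟨N, mem_permutations'.2 (.refl N), hL⟩)
  rintro rfl
  simpa using hperm.length_eq

lemma sum_perm_ofFn_comp {M : Type*} [AddCommMonoid M] {n : ℕ} {l : Fin n → α}
    (hl : Function.Injective l) (F : List α → M) :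
    ∑ σ : Equiv.Perm (Fin n), F (ofFn (l ∘ σ)) = ((ofFn l).permutations'.map F).sum := by
  classical
  have hnodup : (ofFn l).permutations'.Nodup :=
    (permutations_perm_permutations' _).nodup_iff.1 (nodup_permutations _ (nodup_ofFn.2 hl))
  have hinj : Function.Injective fun σ : Equiv.Perm (Fin n) => ofFn (l ∘ σ) :=
    fun σ τ h => Equiv.ext fun k => hl (congrFun (ofFn_injective h) k)
  have himage : univ.image (fun σ : Equiv.Perm (Fin n) => ofFn (l ∘ σ)) =
      (ofFn l).permutations'.toFinset := by
    refine eq_of_subset_of_card_le (fun L hL => ?_) ?_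
    · obtain ⟨σ, -, rfl⟩ := mem_image.1 hL
      exact mem_toFinset.2 (mem_permutations'.2 (σ.ofFn_comp_perm l))
    · rw [card_image_of_injective _ hinj, toFinset_card_of_nodup hnodup,
        ← (permutations_perm_permutations' _).length_eq, length_permutations,
        card_univ, Fintype.card_perm, Fintype.card_fin, length_ofFn]
  rw [← sum_toFinset _ hnodup, ← himage, sum_image hinj.injOn]

end List

namespace Polynomial

variable {K : Type*} [Field K]

lemma slope_eval_eq_eval_divByMonic (p : K[X]) {x y : K} (hyx : y ≠ x) :
    slope (eval · p) x y = (p /ₘ (X - C x)).eval y := by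
  have hp := congrArg (eval y) (p.modByMonic_add_div (X - C x))
  rw [modByMonic_X_sub_C_eq_C_eval, eval_add, eval_mul, eval_sub, eval_X, eval_C, eval_C] at hp
  rw [slope_def_field, ← hp, add_sub_cancel_left, mul_div_cancel_left₀ _ (sub_ne_zero.2 hyx)]

lemma natDegree_divByMonic_X_sub_C_le {p : K[X]} {a : ℕ} (hp : p.natDegree ≤ a + 1) (x : K) :
    (p /ₘ (X - C x)).natDegree ≤ a := by
  rw [natDegree_divByMonic p (monic_X_sub_C x), natDegree_X_sub_C]
  omega

lemma coeff_divByMonic_X_sub_C_of_natDegree_le {p : K[X]} {a : ℕ} (hp : p.natDegree ≤ a + 1)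
    (x : K) : (p /ₘ (X - C x)).coeff a = p.coeff (a + 1) := by
  rw [coeff_divByMonic_X_sub_C_rec, coeff_eq_zero_of_natDegree_lt
    ((natDegree_divByMonic_X_sub_C_le hp x).trans_lt a.lt_succ_self), mul_zero, add_zero]

lemma divByMonic_X_sub_C_eq_zero {p : K[X]} (hp : p.natDegree = 0) (x : K) :
    p /ₘ (X - C x) = 0 :=
  (divByMonic_eq_zero_iff (monic_X_sub_C x)).2 (degree_lt_degree (by simp [hp]))

end Polynomial

section EndpointSum

variable {K : Type*} [Field K]

def consecDiffProd : List K → K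
  | a :: b :: L => (a - b) * consecDiffProd (b :: L)
  | _ => 1

def endpointWeight (g h : K → K) (L : List K) : K :=
  g (L.headD 0) * h (L.getLastD 0) / consecDiffProd L

def endpointSum (g h : K → K) (M : List K) : K :=
  (M.permutations'.map (endpointWeight g h)).sum

lemma consecDiffProd_cons (a : K) {L : List K} (hL : L ≠ []) :
    consecDiffProd (a :: L) = (a - L.headD 0) * consecDiffProd L := by
  obtain ⟨b, L, rfl⟩ := List.exists_cons_of_ne_nil hL
  rfl

lemma consecDiffProd_ofFn : ∀ {n : ℕ} (f : Fin (n + 1) → K),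
    consecDiffProd (List.ofFn f) = ∏ k : Fin n, (f k.castSucc - f k.succ)
  | 0, _ => rfl
  | n + 1, f => by
    rw [List.ofFn_succ, consecDiffProd_cons _ (by simp), List.headD_ofFn,
      consecDiffProd_ofFn fun i => f i.succ, Fin.prod_univ_succ]
    rfl

lemma endpointWeight_cons (g h : K → K) (y : K) {L : List K} (hL : L ≠ []) :
    endpointWeight g h (y :: L) = endpointWeight (fun w => g y / (y - w)) h L := by
  rw [endpointWeight, endpointWeight, consecDiffProd_cons y hL, List.getLastD_cons,
    L.getLastD_eq_of_ne_nil hL y 0, List.headD_cons, ← div_div]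
  ring

lemma sum_permutations'Aux_endpointWeight {x : K} {M : List K} (hM : M ≠ [])
    (hxM : (x :: M).Nodup) (g h : K → K) :
    ((M.permutations'Aux x).map (endpointWeight g h)).sum =
      endpointWeight (slope g x) h M - endpointWeight g (slope h x) M := by
  induction M generalizing g with
  | nil => exact absurd rfl hM
  | cons y N ih =>
    rcases eq_or_ne N [] with rfl | hN
    · have hxy : x - y ≠ 0 := sub_ne_zero.2 fun h => by simp [h] at hxM
      have hyx : y - x ≠ 0 := sub_ne_zero.2 fun h => by simp [h] at hxM
      simp only [List.permutations'Aux, List.map_cons, List.map_nil, endpointWeight,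
        List.headD_cons, List.getLastD_cons, List.getLastD_nil, consecDiffProd, List.sum_cons,
        List.sum_nil, add_zero, slope_def_field, div_one]
      field_simp
      ring
    obtain ⟨hne, hxN⟩ : x ≠ y ∧ x ∉ N := by simpa using (List.nodup_cons.1 hxM).1
    have hyN : y ∉ N := (List.nodup_cons.1 hxM.of_cons).1
    have hd := List.headD_mem hN 0
    have he := List.getLastD_mem hN 0
    have hxy : x - y ≠ 0 := sub_ne_zero.2 hne
    have hyx : y - x ≠ 0 := sub_ne_zero.2 hne.symm
    have hdx : N.headD 0 - x ≠ 0 := sub_ne_zero.2 fun h => hxN (h ▸ hd)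
    have hex : N.getLastD 0 - x ≠ 0 := sub_ne_zero.2 fun h => hxN (h ▸ he)
    have hyd : y - N.headD 0 ≠ 0 := sub_ne_zero.2 fun h => hyN (h ▸ hd)
    rw [List.permutations'Aux, List.map_cons, List.sum_cons, List.map_map,
      List.map_congr_left (f := endpointWeight g h ∘ List.cons y) fun L hL =>
        endpointWeight_cons g h y (List.ne_nil_of_mem_permutations'Aux hL),
      ih hN (List.nodup_cons.2 ⟨hxN, hxM.of_cons.of_cons⟩),
      endpointWeight_cons _ _ _ (List.cons_ne_nil y N), endpointWeight_cons _ _ _ hN,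
      endpointWeight_cons _ _ _ hN, endpointWeight_cons _ _ _ hN]
    simp only [endpointWeight, slope_def_field]
    field_simp
    ring

lemma endpointSum_cons {x : K} {M : List K} (hM : M ≠ []) (hxM : (x :: M).Nodup) (g h : K → K) :
    endpointSum g h (x :: M) = endpointSum (slope g x) h M - endpointSum g (slope h x) M := by
  have hperm : ∀ L ∈ M.permutations', L ≠ [] ∧ (x :: L).Nodup := fun L hL => by
    have hLM : L.Perm M := List.mem_permutations'.1 hL
    exact ⟨fun h => hM (List.Perm.nil_eq (h ▸ hLM)).symm, (hLM.cons x).nodup_iff.2 hxM⟩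
  simp only [endpointSum, List.permutations', List.flatMap, List.map_flatten, List.sum_flatten,
    List.map_map, Function.comp_def]
  rw [List.map_congr_left fun L hL =>
    sum_permutations'Aux_endpointWeight (hperm L hL).1 (hperm L hL).2 g h]
  simpa using Multiset.sum_map_sub (m := (M.permutations' : Multiset (List K)))

lemma endpointSum_congr {M : List K} (hM : M ≠ []) {g g' h h' : K → K}
    (hg : ∀ y ∈ M, g y = g' y) (hh : ∀ y ∈ M, h y = h' y) :
    endpointSum g h M = endpointSum g' h' M := by
  refine congrArg List.sum (List.map_congr_left fun L hL => ?_)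
  have hLM : L.Perm M := List.mem_permutations'.1 hL
  have hL : L ≠ [] := fun h => hM (List.Perm.nil_eq (h ▸ hLM)).symm
  rw [endpointWeight, endpointWeight, hg _ (hLM.subset (List.headD_mem hL 0)),
    hh _ (hLM.subset (List.getLastD_mem hL 0))]

lemma endpointSum_singleton (g h : K → K) (x : K) : endpointSum g h [x] = g x * h x := by
  simp [endpointSum, endpointWeight, List.permutations', List.permutations'Aux, consecDiffProd]

lemma endpointSum_zero_left (h : K → K) (M : List K) : endpointSum (fun _ => 0) h M = 0 := by
  unfold endpointSum endpointWeight
  simp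

lemma endpointSum_zero_right (g : K → K) (M : List K) : endpointSum g (fun _ => 0) M = 0 := by
  unfold endpointSum endpointWeight
  simp

theorem endpointSum_eval {M : List K} (hM : M.Nodup) {p q : K[X]} {a b : ℕ}
    (hp : p.natDegree ≤ a) (hq : q.natDegree ≤ b) (hab : M.length = a + b + 1) :
    endpointSum (eval · p) (eval · q) M = (-1) ^ b * (a + b).choose b * p.coeff a * q.coeff b := by
  induction M generalizing p q a b with
  | nil => simp at hab
  | cons x Y ih =>
    rcases eq_or_ne Y [] with rfl | hY
    · obtain ⟨rfl, rfl⟩ : a = 0 ∧ b = 0 := by simp at hab; omega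
      rw [endpointSum_singleton, eq_C_of_natDegree_le_zero hp, eq_C_of_natDegree_le_zero hq]
      simp
    have hxY : x ∉ Y := (List.nodup_cons.1 hM).1
    have hslope (r : K[X]) : ∀ y ∈ Y, slope (eval · r) x y = eval y (r /ₘ (X - C x)) :=
      fun y hy => r.slope_eval_eq_eval_divByMonic fun h => hxY (h ▸ hy)
    rw [endpointSum_cons hY hM, endpointSum_congr hY (hslope p) fun _ _ => rfl,
      endpointSum_congr hY (fun _ _ => rfl) (hslope q)]
    simp only [List.length_cons, add_left_inj] at hab
    obtain _ | a := a <;> obtain _ | b := b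
    · exact absurd (List.length_eq_zero_iff.1 hab) hY
    · rw [divByMonic_X_sub_C_eq_zero (Nat.le_zero.1 hp)]
      simp only [eval_zero]
      rw [endpointSum_zero_left, zero_sub,
        ih hM.of_cons hp (natDegree_divByMonic_X_sub_C_le hq x) (by omega),
        coeff_divByMonic_X_sub_C_of_natDegree_le hq]
      simp [pow_succ]
    · rw [divByMonic_X_sub_C_eq_zero (Nat.le_zero.1 hq)]
      simp only [eval_zero]
      rw [endpointSum_zero_right, sub_zero,
        ih hM.of_cons (natDegree_divByMonic_X_sub_C_le hp x) hq (by omega),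
        coeff_divByMonic_X_sub_C_of_natDegree_le hp]
      simp
    · rw [ih hM.of_cons (natDegree_divByMonic_X_sub_C_le hp x) hq (by omega),
        ih hM.of_cons hp (natDegree_divByMonic_X_sub_C_le hq x) (by omega),
        coeff_divByMonic_X_sub_C_of_natDegree_le hp, coeff_divByMonic_X_sub_C_of_natDegree_le hq,
        show a + 1 + (b + 1) = a + (b + 1) + 1 by ring, Nat.choose_succ_succ,
        show a + 1 + b = a + (b + 1) by ring]
      push_cast
      ring

theorem sum_perm_eval_mul_eval_div_prod_sub {n : ℕ} {l : Fin (n + 1) → K}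
    (hl : Function.Injective l) {p q : K[X]} {a b : ℕ} (hp : p.natDegree ≤ a)
    (hq : q.natDegree ≤ b) (hab : a + b = n) :
    ∑ σ : Equiv.Perm (Fin (n + 1)), p.eval (l (σ 0)) * q.eval (l (σ (Fin.last n))) /
        ∏ k : Fin n, (l (σ k.castSucc) - l (σ k.succ)) =
      (-1) ^ b * n.choose b * p.coeff a * q.coeff b := by
  have hσ (σ : Equiv.Perm (Fin (n + 1))) : p.eval (l (σ 0)) * q.eval (l (σ (Fin.last n))) /
      ∏ k : Fin n, (l (σ k.castSucc) - l (σ k.succ)) =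
      endpointWeight (eval · p) (eval · q) (List.ofFn (l ∘ σ)) := by
    rw [endpointWeight, List.headD_ofFn, List.getLastD_ofFn, consecDiffProd_ofFn]
    rfl
  simp_rw [hσ]
  rw [List.sum_perm_ofFn_comp hl]
  subst hab
  exact endpointSum_eval (List.nodup_ofFn.2 hl) hp hq List.length_ofFn

end EndpointSum

theorem stmt18 (n : ℕ) (t : ℝ) (l : Fin (n+1) → ℝ) (hl : Function.Injective l) :
    ∑ σ : Equiv.Perm (Fin (n+1)), ∏ k : Fin n,
      (l (σ 0) - t * l (σ (Fin.last n))) / (l (σ k.castSucc) - l (σ k.succ))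
    = ∑ k ∈ Finset.range (n+1), (n.choose k : ℝ)^2 * t^k := by
  have hexpand (σ : Equiv.Perm (Fin (n + 1))) :
      ∏ k : Fin n, (l (σ 0) - t * l (σ (Fin.last n))) / (l (σ k.castSucc) - l (σ k.succ)) =
        ∑ m ∈ range (n + 1), n.choose m * (-t) ^ m *
          ((X ^ (n - m) : ℝ[X]).eval (l (σ 0)) * (X ^ m : ℝ[X]).eval (l (σ (Fin.last n))) /
            ∏ k : Fin n, (l (σ k.castSucc) - l (σ k.succ))) := by
    rw [prod_div_distrib, prod_const, card_univ, Fintype.card_fin,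
      show l (σ 0) - t * l (σ (Fin.last n)) = -t * l (σ (Fin.last n)) + l (σ 0) by ring,
      add_pow, sum_div]
    refine sum_congr rfl fun m _ => ?_
    simp only [eval_pow, eval_X]
    ring
  simp_rw [hexpand]
  rw [sum_comm]
  refine sum_congr rfl fun m hm => ?_
  rw [← mul_sum, sum_perm_eval_mul_eval_div_prod_sub hl (natDegree_X_pow_le _)
    (natDegree_X_pow_le _) (Nat.sub_add_cancel (mem_range_succ_iff.1 hm)),
    coeff_X_pow_self, coeff_X_pow_self]
  have hsign : (-t) ^ m * (-1) ^ m = t ^ m := by rw [← mul_pow, neg_mul_neg, mul_one]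
  linear_combination (n.choose m : ℝ) ^ 2 * hsign
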